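/- arXiv:2405.03475 — 2 statements merged into one kernel-verified Lean document; each statement's English description precedes it below -/
import Mathlib

section
/- Let R be a commutative ring, w ∈ R, and (A,B) a matrix factorization of w (i.e. A,B ∈ R^{k×k} with AB = BA = w·I_k). Then for variables x,y (in a polynomial extension R[x,y]), the pair of 2k×2k matrices ([[x·I_k, A],[B, -y·I_k]], [[y·I_k, A],[B, -x·I_k]]) is a matrix factorization of w + xy, i.e. their product in either order equals (w+xy)·I_{2k}. -/
open MvPolynomial

/-- Adding a double point to a matrix factorization.  If `(A, B)` is a
matrix factorization of `w ∈ R` (i.e. `A*B = B*A = w • 1`), then over `R[x,y]` the pair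
`([[x•1, A],[B, -y•1]], [[y•1, A],[B, -x•1]])` is a matrix factorization of `w + x*y`. -/
theorem double_point_matrix_factorization {R : Type*} [CommRing R] {k : ℕ}
    (w : R) (A B : Matrix (Fin k) (Fin k) R)
    (hAB : A * B = w • (1 : Matrix (Fin k) (Fin k) R))
    (hBA : B * A = w • (1 : Matrix (Fin k) (Fin k) R)) :
    letI S := MvPolynomial (Fin 2) R
    letI x : S := X 0
    letI y : S := X 1
    letI A' := A.map (C : R → S)
    letI B' := B.map (C : R → S)
    letI M₁ := Matrix.fromBlocks (x • 1) A' B' (-(y • (1 : Matrix (Fin k) (Fin k) S)))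
    letI M₂ := Matrix.fromBlocks (y • 1) A' B' (-(x • (1 : Matrix (Fin k) (Fin k) S)))
    M₁ * M₂ = (C w + x * y) • (1 : Matrix (Fin k ⊕ Fin k) (Fin k ⊕ Fin k) S) ∧
      M₂ * M₁ = (C w + x * y) • (1 : Matrix (Fin k ⊕ Fin k) (Fin k ⊕ Fin k) S) := by

  set S := MvPolynomial (Fin 2) R
  set x : S := X 0
  set y : S := X 1
  set A' := A.map (C : R → S)
  set B' := B.map (C : R → S)
  have hA'B' : A' * B' = (C w : S) • (1 : Matrix (Fin k) (Fin k) S) := by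
    rw [← Matrix.map_mul, hAB]
    ext i j
    simp [Matrix.one_apply, apply_ite (C : R → S)]
  have hB'A' : B' * A' = (C w : S) • (1 : Matrix (Fin k) (Fin k) S) := by
    rw [← Matrix.map_mul, hBA]
    ext i j
    simp [Matrix.one_apply, apply_ite (C : R → S)]
  constructor <;>
  · rw [Matrix.fromBlocks_multiply, ← Matrix.fromBlocks_one,
      Matrix.fromBlocks_smul]
    congr 1 <;> simp [hA'B', hB'A', Matrix.mul_smul, Matrix.smul_mul,
      smul_smul, mul_comm, add_comm, add_smul]
end

section
/- Let R be a commutative ring and f = (f_1,…,f_k) an R-regular sequence. Then the Koszul complex K•(f) on f is a resolution of R/(f_1,…,f_k): its homology vanishes in all degrees except degree 0, where it equals R/(f_1,…,f_k). -/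
/-!
Induction on the length of the sequence. Write `f = (f', s)` and split
`Λ(Rᵏ⁺¹) = Λ(Rᵏ) ⊕ e ∧ Λ(Rᵏ)` along the last basis vector `e`: a form `x = a + e ∧ b` is a
`δ_f`-cycle iff `δ_{f'} b = 0` and `δ_{f'} a = -s b`. Then `b = δ_{f'} c` (by induction, or in
degree `0` because `s` is regular modulo `(f')`), so `a + s c` is a `δ_{f'}`-cycle, say
`a + s c = δ_{f'} d`, and `x = δ_f (d - e ∧ c)`.
-/

open ExteriorAlgebra
open CliffordAlgebra (contractLeft contractLeft_ι contractLeft_ι_mul contractLeft_comm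
  contractLeft_contractLeft)

namespace ExteriorAlgebra

variable {R M N : Type*} [CommRing R] [AddCommGroup M] [Module R M] [AddCommGroup N] [Module R N]

theorem ι_mul_mem_exteriorPower (m : M) {i : ℕ} {x : ExteriorAlgebra R M} (hx : x ∈ ⋀[R]^i M) :
    ι R m * x ∈ ⋀[R]^(i + 1) M := by
  rw [exteriorPower, pow_succ']
  exact Submodule.mul_mem_mul (LinearMap.mem_range_self _ m) hx

theorem contractLeft_mem_exteriorPower (φ : Module.Dual R M) {i : ℕ} {x : ExteriorAlgebra R M}
    (hx : x ∈ ⋀[R]^i M) : contractLeft φ x ∈ ⋀[R]^(i - 1) M := by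
  induction hx using Submodule.pow_induction_on_left' with
  | algebraMap r => simp
  | add x y i _ _ hx hy => simpa using add_mem hx hy
  | mem_mul m hm i x hx ih =>
    obtain ⟨v, rfl⟩ := hm
    rw [contractLeft_ι_mul, Nat.succ_sub_one]
    refine sub_mem (Submodule.smul_mem _ _ hx) ?_
    cases i with
    | zero =>
      rw [pow_zero] at hx
      obtain ⟨r, rfl⟩ := Submodule.mem_one.mp hx
      simp
    | succ j => exact ι_mul_mem_exteriorPower v ih

theorem map_mem_exteriorPower (g : M →ₗ[R] N) {i : ℕ} {x : ExteriorAlgebra R M}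
    (hx : x ∈ ⋀[R]^i M) : map g x ∈ ⋀[R]^i N := by
  have : (⋀[R]^i M).map (map g).toLinearMap ≤ ⋀[R]^i N := by
    rw [exteriorPower, Submodule.map_pow, ι_range_map_map]
    exact pow_le_pow_left' LinearMap.map_le_range i
  exact this ⟨x, hx, rfl⟩

theorem contractLeft_map (g : M →ₗ[R] N) (φ : Module.Dual R N) (x : ExteriorAlgebra R M) :
    contractLeft φ (map g x) = map g (contractLeft (φ ∘ₗ g) x) := by
  induction x using CliffordAlgebra.left_induction with
  | algebraMap r => simp
  | add x y hx hy => simp [hx, hy]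
  | ι_mul x m hx => simp [contractLeft_ι_mul, hx]

/-- `hq` says `q = id - ψ(·) e`; for `ψ e = 1` this is the splitting
`Λ M = Λ (ker ψ) ⊕ e ∧ Λ (ker ψ)`. -/
theorem map_add_ι_mul_map_contractLeft (ψ : Module.Dual R M) (e : M) (q : M →ₗ[R] M)
    (hq : ∀ m, q m + ψ m • e = m) (x : ExteriorAlgebra R M) :
    map q x + ι R e * map q (contractLeft ψ x) = x := by
  induction x using CliffordAlgebra.left_induction with
  | algebraMap r => simp
  | add x y hx hy =>
    rw [map_add, map_add, map_add, mul_add, add_add_add_comm, hx, hy]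
  | ι_mul x m hx =>
    have hιe : ι R e * map q x = ι R e * x := by
      conv_rhs => rw [← hx]
      rw [mul_add, ← mul_assoc, ι_sq_zero, zero_mul, add_zero]
    have hanti : ι R e * ι R (q m) = -(ι R (q m) * ι R e) :=
      eq_neg_of_add_eq_zero_left (ι_add_mul_swap _ _)
    calc map q (ι R m * x) + ι R e * map q (contractLeft ψ (ι R m * x))
        = ι R (q m) * (map q x + ι R e * map q (contractLeft ψ x)) +
            ψ m • (ι R e * map q x) := by
          rw [contractLeft_ι_mul, map_mul, map_apply_ι, map_sub, map_smul, map_mul, map_apply_ι,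
            mul_sub, mul_smul_comm, ← mul_assoc, hanti]
          simp only [mul_add, neg_mul, mul_assoc, sub_neg_eq_add]
          abel
      _ = ι R (q m + ψ m • e) * x := by
          rw [hx, hιe, map_add, map_smul, add_mul, smul_mul_assoc]
      _ = ι R m * x := by rw [hq]

theorem exists_mem_exteriorPower_one_contractLeft_eq_algebraMap_iff (φ : Module.Dual R M) (r : R) :
    (∃ y ∈ ⋀[R]^1 M, contractLeft φ y = algebraMap R (ExteriorAlgebra R M) r) ↔
      r ∈ LinearMap.range φ := by
  simp [exteriorPower, contractLeft_ι, ExteriorAlgebra.algebraMap_inj]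

end ExteriorAlgebra

open RingTheory.Sequence

namespace Koszul

variable {R : Type*} [CommRing R] {k : ℕ}

abbrev koszulForm (f : Fin k → R) : Module.Dual R (Fin k → R) :=
  ∑ i, f i • LinearMap.proj i

theorem koszulForm_apply (f v : Fin k → R) : koszulForm f v = ∑ i, f i * v i := by
  simp [LinearMap.sum_apply]

theorem range_koszulForm (f : Fin k → R) :
    LinearMap.range (koszulForm f) = Ideal.span (Set.range f) := by
  have : koszulForm f = Fintype.linearCombination R f := LinearMap.ext fun v => by
    simp [koszulForm_apply, Fintype.linearCombination_apply, mul_comm]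
  rw [this, Fintype.range_linearCombination]

def KoszulAcyclic (f : Fin k → R) : Prop :=
  ∀ n : ℕ, ∀ x ∈ ⋀[R]^(n + 1) (Fin k → R), contractLeft (koszulForm f) x = 0 →
    ∃ y ∈ ⋀[R]^(n + 2) (Fin k → R), contractLeft (koszulForm f) y = x

theorem koszulAcyclic_of_isEmpty (f : Fin 0 → R) : KoszulAcyclic f := by
  intro n x hx _
  have hι : LinearMap.range (ι R : (Fin 0 → R) →ₗ[R] _) = ⊥ := by
    rw [LinearMap.range_eq_bot, Subsingleton.elim (ι R) 0]
  rw [exteriorPower, hι, pow_succ, Submodule.mul_bot, Submodule.mem_bot] at hx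
  exact ⟨0, zero_mem _, by rw [hx, map_zero]⟩

variable (R k) in
def extendByZero : (Fin k → R) →ₗ[R] (Fin (k + 1) → R) where
  toFun v := Fin.snoc v 0
  map_add' u v := funext fun i => by induction i using Fin.lastCases <;> simp
  map_smul' c v := funext fun i => by induction i using Fin.lastCases <;> simp

variable (R k) in
def truncLast : (Fin (k + 1) → R) →ₗ[R] (Fin k → R) :=
  LinearMap.funLeft R R Fin.castSucc

theorem extendByZero_truncLast_add (v : Fin (k + 1) → R) :
    extendByZero R k (truncLast R k v) + v (Fin.last k) • Pi.single (Fin.last k) 1 = v := by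
  funext i
  induction i using Fin.lastCases with
  | last => simp [extendByZero]
  | cast i => simp [extendByZero, truncLast, LinearMap.funLeft, (Fin.castSucc_lt_last i).ne]

theorem koszulForm_comp_extendByZero (f : Fin (k + 1) → R) :
    koszulForm f ∘ₗ extendByZero R k = koszulForm (Fin.init f) :=
  LinearMap.ext fun v => by
    simp [koszulForm_apply, Fin.sum_univ_castSucc, extendByZero, Fin.init]

theorem koszulForm_init_comp_truncLast (f : Fin (k + 1) → R) :
    koszulForm (Fin.init f) ∘ₗ truncLast R k =
      koszulForm f - f (Fin.last k) • LinearMap.proj (Fin.last k) :=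
  LinearMap.ext fun v => by
    simp [Fin.sum_univ_castSucc, truncLast, LinearMap.funLeft, Fin.init]

theorem koszulForm_single_last (f : Fin (k + 1) → R) :
    koszulForm f (Pi.single (Fin.last k) 1) = f (Fin.last k) := by
  simp [koszulForm_apply, Pi.single_apply]

theorem contractLeft_koszulForm_map_extendByZero (f : Fin (k + 1) → R)
    (z : ExteriorAlgebra R (Fin k → R)) :
    contractLeft (koszulForm f) (map (extendByZero R k) z) =
      map (extendByZero R k) (contractLeft (koszulForm (Fin.init f)) z) := by
  rw [contractLeft_map, koszulForm_comp_extendByZero]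

theorem contractLeft_koszulForm_init_map_truncLast (f : Fin (k + 1) → R)
    (x : ExteriorAlgebra R (Fin (k + 1) → R)) :
    contractLeft (koszulForm (Fin.init f)) (map (truncLast R k) x) =
      map (truncLast R k) (contractLeft (koszulForm f) x) -
        f (Fin.last k) • map (truncLast R k) (contractLeft (LinearMap.proj (Fin.last k)) x) := by
  rw [contractLeft_map, koszulForm_init_comp_truncLast, map_sub, map_smul, LinearMap.sub_apply,
    LinearMap.smul_apply, map_sub, map_smul]

theorem map_extendByZero_truncLast_add (x : ExteriorAlgebra R (Fin (k + 1) → R)) :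
    map (extendByZero R k) (map (truncLast R k) x) +
      ι R (Pi.single (Fin.last k) 1) * map (extendByZero R k)
        (map (truncLast R k) (contractLeft (LinearMap.proj (Fin.last k)) x)) = x := by
  simp only [← AlgHom.comp_apply, map_comp_map]
  exact map_add_ι_mul_map_contractLeft _ _ _ extendByZero_truncLast_add x

theorem exists_contractLeft_eq_of_isSMulRegular {g : Fin k → R} {s : R}
    (hs : IsSMulRegular (R ⧸ Ideal.span (Set.range g)) s) {a b : ExteriorAlgebra R (Fin k → R)}
    (ha : a ∈ ⋀[R]^1 (Fin k → R)) (hb : b ∈ ⋀[R]^0 (Fin k → R))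
    (hab : contractLeft (koszulForm g) a = -(s • b)) :
    ∃ c ∈ ⋀[R]^1 (Fin k → R), contractLeft (koszulForm g) c = b := by
  rw [exteriorPower, pow_zero] at hb
  obtain ⟨r, rfl⟩ := Submodule.mem_one.mp hb
  have hsr : -(s * r) ∈ Ideal.span (Set.range g) := by
    rw [← range_koszulForm, ← exists_mem_exteriorPower_one_contractLeft_eq_algebraMap_iff]
    exact ⟨a, ha, by rw [hab, map_neg, map_mul, Algebra.smul_def]⟩
  have hr : r ∈ Ideal.span (Set.range g) :=
    mem_of_isSMulRegular_quotient_of_smul_mem hs (by simpa using hsr)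
  rwa [← range_koszulForm, ← exists_mem_exteriorPower_one_contractLeft_eq_algebraMap_iff] at hr

theorem koszulAcyclic_of_init (f : Fin (k + 1) → R) (hinit : KoszulAcyclic (Fin.init f))
    (hreg : IsSMulRegular (R ⧸ Ideal.span (Set.range (Fin.init f))) (f (Fin.last k))) :
    KoszulAcyclic f := by
  intro n x hx hδx
  set a := map (truncLast R k) x
  set b := map (truncLast R k) (contractLeft (LinearMap.proj (Fin.last k)) x)
  have ha : a ∈ ⋀[R]^(n + 1) (Fin k → R) := map_mem_exteriorPower _ hx
  have hb : b ∈ ⋀[R]^n (Fin k → R) :=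
    map_mem_exteriorPower _ (contractLeft_mem_exteriorPower _ hx)
  have hδa : contractLeft (koszulForm (Fin.init f)) a = -(f (Fin.last k) • b) := by
    rw [contractLeft_koszulForm_init_map_truncLast, hδx, map_zero, zero_sub]
  have hδb : contractLeft (koszulForm (Fin.init f)) b = 0 := by
    rw [contractLeft_koszulForm_init_map_truncLast, contractLeft_comm, hδx, map_zero, neg_zero,
      map_zero, contractLeft_contractLeft, map_zero, smul_zero, sub_zero]
  obtain ⟨c, hc, hδc⟩ : ∃ c ∈ ⋀[R]^(n + 1) (Fin k → R),
      contractLeft (koszulForm (Fin.init f)) c = b := by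
    cases n with
    | zero => exact exists_contractLeft_eq_of_isSMulRegular hreg ha hb hδa
    | succ n => exact hinit n b hb hδb
  obtain ⟨d, hd, hδd⟩ := hinit n (a + f (Fin.last k) • c)
    (add_mem ha (Submodule.smul_mem _ _ hc)) (by rw [map_add, map_smul, hδa, hδc, neg_add_cancel])
  refine ⟨map (extendByZero R k) d - ι R (Pi.single (Fin.last k) 1) * map (extendByZero R k) c,
    sub_mem (map_mem_exteriorPower _ hd) (ι_mul_mem_exteriorPower _ (map_mem_exteriorPower _ hc)),
    ?_⟩
  calc _ = map (extendByZero R k) (a + f (Fin.last k) • c) -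
        (f (Fin.last k) • map (extendByZero R k) c -
          ι R (Pi.single (Fin.last k) 1) * map (extendByZero R k) b) := by
        rw [map_sub, contractLeft_ι_mul, koszulForm_single_last,
          contractLeft_koszulForm_map_extendByZero, contractLeft_koszulForm_map_extendByZero,
          hδd, hδc]
    _ = map (extendByZero R k) a + ι R (Pi.single (Fin.last k) 1) * map (extendByZero R k) b := by
        rw [map_add, map_smul]
        abel
    _ = x := map_extendByZero_truncLast_add x

theorem isWeaklyRegular_ofFn_init {f : Fin (k + 1) → R} (h : IsWeaklyRegular R (List.ofFn f)) :
    IsWeaklyRegular R (List.ofFn (Fin.init f)) ∧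
      IsSMulRegular (R ⧸ Ideal.span (Set.range (Fin.init f))) (f (Fin.last k)) := by
  rw [List.ofFn_succ', List.concat_eq_append, isWeaklyRegular_append_iff,
    isWeaklyRegular_singleton_iff] at h
  have hI : (Ideal.ofList (List.ofFn (Fin.init f)) • ⊤ : Submodule R R) =
      Ideal.span (Set.range (Fin.init f)) := by
    rw [Ideal.smul_eq_mul, Ideal.mul_top, Ideal.ofList]
    congr 1
    ext
    exact List.mem_ofFn
  exact ⟨h.1, hI ▸ h.2⟩

theorem koszulAcyclic_of_isWeaklyRegular (f : Fin k → R) (h : IsWeaklyRegular R (List.ofFn f)) :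
    KoszulAcyclic f := by
  induction k with
  | zero => exact koszulAcyclic_of_isEmpty f
  | succ k ih =>
    obtain ⟨hreg_init, hreg_last⟩ := isWeaklyRegular_ofFn_init h
    exact koszulAcyclic_of_init f (ih _ hreg_init) hreg_last

end Koszul

/-- if `f = (f₁,…,f_k)` is a regular sequence in a commutative ring `R`,
the Koszul complex `K•(f) = (Λ•(Rᵏ), δ_f)` is a resolution of `R/(f₁,…,f_k)`: it is
exact in every positive degree (every cycle of degree `i ≥ 1` is a boundary), and in
degree `0` the image of `δ_f` is exactly the ideal `(f₁,…,f_k)`, so that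
`H₀ = R/(f₁,…,f_k)` and all other homology vanishes. -/
theorem koszul_complex_resolution_of_regular_sequence
    {R : Type*} [CommRing R] {k : ℕ} (f : Fin k → R)
    (hreg : RingTheory.Sequence.IsRegular R (List.ofFn f)) :
    letI N := Fin k → R
    letI G : ℕ → Submodule R (ExteriorAlgebra R N) :=
      fun i => LinearMap.range (ExteriorAlgebra.ι R : N →ₗ[R] ExteriorAlgebra R N) ^ i
    letI φf : Module.Dual R N := ∑ i, f i • LinearMap.proj i
    letI δ : ExteriorAlgebra R N →ₗ[R] ExteriorAlgebra R N :=
      CliffordAlgebra.contractLeft φf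
    (∀ i : ℕ, 1 ≤ i → ∀ x ∈ G i, δ x = 0 → ∃ y ∈ G (i + 1), δ y = x) ∧
      (∀ r : R,
        (∃ y ∈ G 1, δ y = algebraMap R (ExteriorAlgebra R N) r) ↔
          r ∈ Ideal.span (Set.range f)) := by
  refine ⟨fun i hi x hx hδx => ?_, fun r => ?_⟩
  · obtain ⟨n, rfl⟩ := Nat.exists_eq_add_of_le' hi
    exact Koszul.koszulAcyclic_of_isWeaklyRegular f hreg.toIsWeaklyRegular n x hx hδx
  · rw [← Koszul.range_koszulForm]
    exact exists_mem_exteriorPower_one_contractLeft_eq_algebraMap_iff _ r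
end
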